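/- Let m be a positive integer, v ∈ ℝ^m with v_i > 0 for at least one index i, s ∈ ℝ, and r ≥ 0. Let v⁺ be the componentwise positive part of v. Then the supremum of (λ·v + s·‖λ‖₂) over all λ ∈ ℝ^m with λ_i ≥ 0 for all i and ‖λ‖₂ ≤ r equals r·max(s + ‖v⁺‖₂, 0), and this supremum is attained. -/
import Mathlib


open scoped BigOperators

/-- If some component of `v` is positive, the supremum of `λ·v + s·‖λ‖₂` over
`λ ≥ 0` with `‖λ‖₂ ≤ r` equals `r·max(s + ‖v⁺‖₂, 0)`, and it is attained (`IsGreatest`).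
Here `v⁺` is the componentwise positive part of `v`. -/
theorem stmt_2 (m : ℕ) (hm : 0 < m) (v : Fin m → ℝ) (hv : ∃ i, 0 < v i)
    (s : ℝ) (r : ℝ) (hr : 0 ≤ r) :
    IsGreatest
      {y : ℝ | ∃ l : Fin m → ℝ, (∀ i, 0 ≤ l i) ∧
        Real.sqrt (∑ i, (l i) ^ 2) ≤ r ∧
        y = (∑ i, l i * v i) + s * Real.sqrt (∑ i, (l i) ^ 2)}
      (r * max (s + Real.sqrt (∑ i, (max (v i) 0) ^ 2)) 0) := by
  obtain ⟨i0, hi0⟩ := hv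
  set N := Real.sqrt (∑ i, (max (v i) 0) ^ 2) with hNdef
  have hNnn : 0 ≤ N := Real.sqrt_nonneg _
  have hsum_pos : 0 < ∑ i, (max (v i) 0) ^ 2 := by
    apply Finset.sum_pos' (fun i _ => sq_nonneg _)
    exact ⟨i0, Finset.mem_univ _, pow_pos (lt_of_lt_of_le hi0 (le_max_left _ _)) 2⟩
  have hNpos : 0 < N := Real.sqrt_pos.mpr hsum_pos
  have hN2 : N ^ 2 = ∑ i, (max (v i) 0) ^ 2 := Real.sq_sqrt hsum_pos.le
  have hwv : ∀ i, max (v i) 0 * v i = (max (v i) 0) ^ 2 := by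
    intro i
    rcases le_or_gt 0 (v i) with h | h
    · rw [max_eq_left h]; ring
    · rw [max_eq_right h.le]; ring
  constructor
  · rcases le_or_gt 0 (s + N) with hs | hs
    · have hsq : ∑ i, ((r / N) * max (v i) 0) ^ 2 = (r / N) ^ 2 * ∑ i, (max (v i) 0) ^ 2 := by
        rw [Finset.mul_sum]; exact Finset.sum_congr rfl fun i _ => by ring
      have hrt : Real.sqrt (∑ i, ((r / N) * max (v i) 0) ^ 2) = r := by
        rw [hsq, Real.sqrt_mul (sq_nonneg _), Real.sqrt_sq (by positivity), ← hNdef,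
          div_mul_cancel₀ _ hNpos.ne']
      have hsv : ∑ i, (r / N) * max (v i) 0 * v i = r * N := by
        calc ∑ i, (r / N) * max (v i) 0 * v i
            = (r / N) * ∑ i, (max (v i) 0) ^ 2 := by
              rw [Finset.mul_sum]
              exact Finset.sum_congr rfl fun i _ => by rw [mul_assoc, hwv i]
          _ = (r / N) * N ^ 2 := by rw [hN2]
          _ = r * N := by field_simp
      refine ⟨fun i => (r / N) * max (v i) 0, fun i => by positivity, ?_, ?_⟩
      · rw [hrt]
      · rw [hrt]
        simp only
        rw [hsv, max_eq_left hs]; ring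
    · refine ⟨fun _ => 0, fun i => le_refl 0, ?_, ?_⟩
      · simp [hr]
      · rw [max_eq_right hs.le]; simp
  · rintro y ⟨l, hl, hlr, rfl⟩
    set t := Real.sqrt (∑ i, l i ^ 2) with htdef
    have ht : 0 ≤ t := Real.sqrt_nonneg _
    have h1 : ∑ i, l i * v i ≤ ∑ i, l i * max (v i) 0 :=
      Finset.sum_le_sum fun i _ => mul_le_mul_of_nonneg_left (le_max_left _ _) (hl i)
    have h2 : ∑ i, l i * max (v i) 0 ≤ t * N := by
      have hcs := Finset.sum_mul_sq_le_sq_mul_sq Finset.univ l (fun i => max (v i) 0)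
      have hnn : 0 ≤ ∑ i, l i * max (v i) 0 :=
        Finset.sum_nonneg fun i _ => mul_nonneg (hl i) (le_max_right _ _)
      calc ∑ i, l i * max (v i) 0
          = Real.sqrt ((∑ i, l i * max (v i) 0) ^ 2) := (Real.sqrt_sq hnn).symm
        _ ≤ Real.sqrt ((∑ i, l i ^ 2) * ∑ i, (max (v i) 0) ^ 2) := Real.sqrt_le_sqrt hcs
        _ = t * N := Real.sqrt_mul (Finset.sum_nonneg fun i _ => sq_nonneg _) _
    have key : (∑ i, l i * v i) + s * t ≤ t * (N + s) := by
      have := h1.trans h2; nlinarith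
    rcases le_or_gt 0 (s + N) with hs | hs
    · have : t * (N + s) ≤ r * (N + s) :=
        mul_le_mul_of_nonneg_right hlr (by linarith)
      rw [max_eq_left hs]
      calc (∑ i, l i * v i) + s * t ≤ t * (N + s) := key
        _ ≤ r * (N + s) := this
        _ = r * (s + N) := by ring
    · have : t * (N + s) ≤ 0 := mul_nonpos_of_nonneg_of_nonpos ht (by linarith)
      rw [max_eq_right hs.le, mul_zero]
      linarith
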